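/- arXiv:2102.03071 — 3 statements merged into one kernel-verified Lean document; each statement's English description precedes it below -/
import Mathlib

section
/- Let 0 ≤ α₁ ≤ α₂ ≤ 2π with α₂ − α₁ ≤ π, and let a = (cos α₁ + cos α₂)/2, b = (sin α₁ + sin α₂)/2. Then every pair (e, d) ∈ ℂ × ℝ satisfying d ≤ |e| and arg(e) ∈ [α₁, α₂] also satisfies the three linear inequalities: (i) sin(α₁) Re(e) − cos(α₁) Im(e) ≤ 0, (ii) sin(α₂) Re(e) − cos(α₂) Im(e) ≥ 0, (iii) a Re(e) + b Im(e) ≥ d (a² + b²). -/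
/-- The argument of a complex number taken in `[0, 2π)`. -/
noncomputable def argTwoPi (e : ℂ) : ℝ :=
  if Complex.arg e < 0 then Complex.arg e + 2 * Real.pi else Complex.arg e

/-!
Write `e = r (cos θ, sin θ)` with `θ = argTwoPi e ∈ [α₁, α₂]`. The first two expressions are
`r sin (α₁ - θ) ≤ 0` and `r sin (α₂ - θ) ≥ 0`, because the interval has width at most `π`.
With `m` the midpoint and `h` the half-width of `[α₁, α₂]`, sum-to-product gives
`(a, b) = cos h · (cos m, sin m)`, so `a Re e + b Im e = r cos h cos (m - θ) ≥ r cos² h`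
since `|m - θ| ≤ h ≤ π / 2`, while `a² + b² = cos² h`.
-/

open Real

lemma norm_mul_cos_argTwoPi (e : ℂ) : ‖e‖ * cos (argTwoPi e) = e.re := by
  rw [argTwoPi]
  split_ifs <;> simp only [cos_add_two_pi, Complex.norm_mul_cos_arg]

lemma norm_mul_sin_argTwoPi (e : ℂ) : ‖e‖ * sin (argTwoPi e) = e.im := by
  rw [argTwoPi]
  split_ifs <;> simp only [sin_add_two_pi, Complex.norm_mul_sin_arg]

lemma sin_mul_re_sub_cos_mul_im (e : ℂ) (α : ℝ) :
    sin α * e.re - cos α * e.im = ‖e‖ * sin (α - argTwoPi e) := by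
  rw [← norm_mul_cos_argTwoPi e, ← norm_mul_sin_argTwoPi e, sin_sub]
  ring

lemma cos_mul_re_add_sin_mul_im (e : ℂ) (φ : ℝ) :
    cos φ * e.re + sin φ * e.im = ‖e‖ * cos (φ - argTwoPi e) := by
  rw [← norm_mul_cos_argTwoPi e, ← norm_mul_sin_argTwoPi e, cos_sub]
  ring

lemma cos_add_cos_div_two (x y : ℝ) :
    (cos x + cos y) / 2 = cos ((y - x) / 2) * cos ((x + y) / 2) := by
  rw [cos_add_cos, ← cos_neg ((x - y) / 2)]
  ring_nf

lemma sin_add_sin_div_two (x y : ℝ) :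
    (sin x + sin y) / 2 = cos ((y - x) / 2) * sin ((x + y) / 2) := by
  rw [sin_add_sin, ← cos_neg ((x - y) / 2)]
  ring_nf

theorem stmt_3_general (α₁ α₂ : ℝ)
    (hwidth : α₂ - α₁ ≤ Real.pi)
    (a b : ℝ) (ha : a = (Real.cos α₁ + Real.cos α₂) / 2)
    (hb : b = (Real.sin α₁ + Real.sin α₂) / 2)
    (e : ℂ) (d : ℝ) (hd : d ≤ ‖e‖)
    (harg : argTwoPi e ∈ Set.Icc α₁ α₂) :
    Real.sin α₁ * e.re - Real.cos α₁ * e.im ≤ 0 ∧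
    Real.sin α₂ * e.re - Real.cos α₂ * e.im ≥ 0 ∧
    a * e.re + b * e.im ≥ d * (a ^ 2 + b ^ 2) := by
  obtain ⟨hθ₁, hθ₂⟩ := harg
  set θ := argTwoPi e
  set c := cos ((α₂ - α₁) / 2)
  set m := (α₁ + α₂) / 2 with hm
  have hc : 0 ≤ c := cos_nonneg_of_mem_Icc ⟨by linarith, by linarith⟩
  have hc_le : c ≤ cos (m - θ) := by
    rw [← cos_abs (m - θ)]
    exact cos_le_cos_of_nonneg_of_le_pi (abs_nonneg _) (by linarith)
      (abs_le.2 ⟨by rw [hm]; linarith, by rw [hm]; linarith⟩)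
  have hab : a * e.re + b * e.im = c * (‖e‖ * cos (m - θ)) := by
    rw [ha, hb, cos_add_cos_div_two, sin_add_sin_div_two, ← cos_mul_re_add_sin_mul_im]
    ring
  have hab_sq : a ^ 2 + b ^ 2 = c ^ 2 := by
    rw [ha, hb, cos_add_cos_div_two, sin_add_sin_div_two, ← mul_one (c ^ 2),
      ← sin_sq_add_cos_sq m]
    ring
  refine ⟨?_, ?_, ?_⟩
  · rw [sin_mul_re_sub_cos_mul_im]
    refine mul_nonpos_of_nonneg_of_nonpos (norm_nonneg e) ?_
    rw [← neg_nonneg, ← sin_neg, neg_sub]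
    exact sin_nonneg_of_nonneg_of_le_pi (by linarith) (by linarith)
  · rw [sin_mul_re_sub_cos_mul_im]
    exact mul_nonneg (norm_nonneg e) (sin_nonneg_of_nonneg_of_le_pi (by linarith) (by linarith))
  · rw [hab, hab_sq, ge_iff_le]
    calc d * c ^ 2 ≤ c * (‖e‖ * c) := by nlinarith [sq_nonneg c]
      _ ≤ c * (‖e‖ * cos (m - θ)) := by gcongr

/-- Argument-cut relaxation: every `(e, d)` with `d ≤ |e|` and `arg e ∈ [α₁, α₂]`
satisfies the three affine inequalities of the convex envelope. -/
theorem stmt_3 (α₁ α₂ : ℝ) (h0 : 0 ≤ α₁) (h12 : α₁ ≤ α₂) (h2 : α₂ ≤ 2 * Real.pi)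
    (hwidth : α₂ - α₁ ≤ Real.pi)
    (a b : ℝ) (ha : a = (Real.cos α₁ + Real.cos α₂) / 2)
    (hb : b = (Real.sin α₁ + Real.sin α₂) / 2)
    (e : ℂ) (d : ℝ) (hd : d ≤ ‖e‖)
    (harg : argTwoPi e ∈ Set.Icc α₁ α₂) :
    Real.sin α₁ * e.re - Real.cos α₁ * e.im ≤ 0 ∧
    Real.sin α₂ * e.re - Real.cos α₂ * e.im ≥ 0 ∧
    a * e.re + b * e.im ≥ d * (a ^ 2 + b ^ 2) :=
  stmt_3_general α₁ α₂ hwidth a b ha hb e d hd harg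
end

section
/- Let 0 ≤ α₁ ≤ α₂ ≤ 2π with α₂ − α₁ ≤ π, a = (cos α₁ + cos α₂)/2, b = (sin α₁ + sin α₂)/2. The set of pairs (e, d) ∈ ℂ × ℝ satisfying the three inequalities sin(α₁)Re(e) − cos(α₁)Im(e) ≤ 0, sin(α₂)Re(e) − cos(α₂)Im(e) ≥ 0, and a Re(e) + b Im(e) ≥ d(a² + b²) is a convex set containing {(e,d) : d ≤ |e|, arg e ∈ [α₁, α₂]}. -/
lemma cos_add_cos_ge (u v : ℝ) (hu : 0 ≤ u) (hv : 0 ≤ v) (huv : u + v ≤ Real.pi) :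
    Real.cos u + Real.cos v ≥ 1 + Real.cos (u + v) := by
  have s1 : Real.sin (u / 2) ≥ 0 := Real.sin_nonneg_of_nonneg_of_le_pi (by linarith)
    (by nlinarith [Real.pi_pos])
  have s2 : Real.sin (v / 2) ≥ 0 := Real.sin_nonneg_of_nonneg_of_le_pi (by linarith)
    (by nlinarith [Real.pi_pos])
  have c12 : Real.cos ((u + v) / 2) ≥ 0 := Real.cos_nonneg_of_mem_Icc
    ⟨by nlinarith [Real.pi_pos], by linarith⟩
  have e1 := Real.cos_two_mul' (u / 2)
  rw [show 2 * (u / 2) = u by ring] at e1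
  have e2 := Real.cos_two_mul' (v / 2)
  rw [show 2 * (v / 2) = v by ring] at e2
  have e3 := Real.cos_two_mul' ((u + v) / 2)
  rw [show 2 * ((u + v) / 2) = u + v by ring] at e3
  have e4 : Real.sin ((u + v) / 2) = Real.sin (u / 2) * Real.cos (v / 2)
      + Real.cos (u / 2) * Real.sin (v / 2) := by
    rw [show (u + v) / 2 = u / 2 + v / 2 by ring, Real.sin_add]
  have e5 : Real.cos ((u + v) / 2) = Real.cos (u / 2) * Real.cos (v / 2)
      - Real.sin (u / 2) * Real.sin (v / 2) := by
    rw [show (u + v) / 2 = u / 2 + v / 2 by ring, Real.cos_add]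
  have hx : Real.cos u + Real.cos v - (1 + Real.cos (u + v)) =
      4 * Real.sin (u / 2) * Real.sin (v / 2) * Real.cos ((u + v) / 2) := by
    rw [e1, e2, e3, e5, e4]
    linear_combination (2 * Real.sin (v / 2) ^ 2 -
        (Real.sin (v / 2) ^ 2 + Real.cos (v / 2) ^ 2 - 1)) * Real.sin_sq_add_cos_sq (u / 2) +
      2 * Real.sin (u / 2) ^ 2 * Real.sin_sq_add_cos_sq (v / 2)
  nlinarith [mul_nonneg (mul_nonneg s1 s2) c12, hx]

/-- The set defined by the three argument-cut inequalities is a convex subset of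
`ℂ × ℝ` containing the nonconvex set `{(e,d) : d ≤ |e|, arg e ∈ [α₁, α₂]}`. -/
theorem stmt_4 (α₁ α₂ : ℝ) (h0 : 0 ≤ α₁) (h12 : α₁ ≤ α₂) (h2 : α₂ ≤ 2 * Real.pi)
    (hwidth : α₂ - α₁ ≤ Real.pi)
    (a b : ℝ) (ha : a = (Real.cos α₁ + Real.cos α₂) / 2)
    (hb : b = (Real.sin α₁ + Real.sin α₂) / 2)
    (S : Set (ℂ × ℝ))
    (hS : S = {p : ℂ × ℝ |
      Real.sin α₁ * p.1.re - Real.cos α₁ * p.1.im ≤ 0 ∧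
      Real.sin α₂ * p.1.re - Real.cos α₂ * p.1.im ≥ 0 ∧
      a * p.1.re + b * p.1.im ≥ p.2 * (a ^ 2 + b ^ 2)}) :
    Convex ℝ S ∧
    {p : ℂ × ℝ | p.2 ≤ ‖p.1‖ ∧ argTwoPi p.1 ∈ Set.Icc α₁ α₂} ⊆ S := by
  subst hS
  constructor
  · intro p hp q hq s t hs ht hst
    obtain ⟨hp1, hp2, hp3⟩ := hp
    obtain ⟨hq1, hq2, hq3⟩ := hq
    refine ⟨?_, ?_, ?_⟩ <;>
      simp only [Prod.smul_fst, Prod.smul_snd, Prod.fst_add, Prod.snd_add, Complex.add_re,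
        Complex.add_im, Complex.smul_re, Complex.smul_im, smul_eq_mul] <;>
      nlinarith [mul_le_mul_of_nonneg_left hp3 hs, mul_le_mul_of_nonneg_left hq3 ht,
        mul_le_mul_of_nonneg_left hp1 hs, mul_le_mul_of_nonneg_left hq1 ht,
        mul_le_mul_of_nonneg_left hp2 hs, mul_le_mul_of_nonneg_left hq2 ht]
  · rintro ⟨e, d⟩ ⟨hd, hθ1, hθ2⟩
    set θ := argTwoPi e with hθdef
    set r := ‖e‖ with hrdef
    have hr0 : (0:ℝ) ≤ r := norm_nonneg e
    have hcs : Real.cos θ = Real.cos e.arg ∧ Real.sin θ = Real.sin e.arg := by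
      rw [hθdef]; unfold argTwoPi
      split <;> simp [Real.cos_add_two_pi, Real.sin_add_two_pi]
    have hre : e.re = r * Real.cos θ := by rw [hcs.1, hrdef, Complex.norm_mul_cos_arg]
    have him : e.im = r * Real.sin θ := by rw [hcs.2, hrdef, Complex.norm_mul_sin_arg]
    simp only [Set.mem_setOf_eq] at hd ⊢
    have hsinu : 0 ≤ Real.sin (θ - α₁) :=
      Real.sin_nonneg_of_nonneg_of_le_pi (by linarith) (by linarith)
    have hsinv : 0 ≤ Real.sin (α₂ - θ) :=
      Real.sin_nonneg_of_nonneg_of_le_pi (by linarith) (by linarith)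
    have key := cos_add_cos_ge (θ - α₁) (α₂ - θ) (by linarith) (by linarith) (by linarith)
    rw [show θ - α₁ + (α₂ - θ) = α₂ - α₁ by ring] at key
    have hc1 : (-1:ℝ) ≤ Real.cos (α₂ - α₁) := Real.neg_one_le_cos _
    refine ⟨?_, ?_, ?_⟩
    · rw [hre, him]
      nlinarith [mul_nonneg hr0 hsinu, Real.sin_sub θ α₁]
    · rw [hre, him]
      nlinarith [mul_nonneg hr0 hsinv, Real.sin_sub α₂ θ]
    · have h1 : d * (1 + Real.cos (α₂ - α₁)) ≤ r * (1 + Real.cos (α₂ - α₁)) :=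
        mul_le_mul_of_nonneg_right hd (by linarith)
      have h2 : r * (1 + Real.cos (α₂ - α₁)) ≤
          r * (Real.cos (θ - α₁) + Real.cos (α₂ - θ)) :=
        mul_le_mul_of_nonneg_left key hr0
      calc a * e.re + b * e.im
          = r * (Real.cos (θ - α₁) + Real.cos (α₂ - θ)) / 2 := by
            rw [hre, him, ha, hb, Real.cos_sub, Real.cos_sub]; ring
        _ ≥ d * (1 + Real.cos (α₂ - α₁)) / 2 := by linarith
        _ = d * (a ^ 2 + b ^ 2) := by
            rw [ha, hb, Real.cos_sub]
            linear_combination (-d / 4) * Real.sin_sq_add_cos_sq α₁ +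
              (-d / 4) * Real.sin_sq_add_cos_sq α₂
end

section
/- Under the hypotheses of the previous condition, for each index κ the value γ_κ satisfies γ_κ ≥ 2^{(δW − U)/u_κ} · (1 + b_κ) − 1, where U = (max_k u_k) log₂(1+ b_s) + Σ_k u_k log₂(1+ b_k), whenever γ_k ≤ b_k for all k, s ≤ b_s, and u_κ > 0. That is: if Σ_k u_k(C_k + log₂(1+γ_k)) ≥ δW, Σ_k C_k ≤ log₂(1+s) ≤ log₂(1+b_s), C_k ≥ 0, and γ_k ≤ b_k, then log₂(1+γ_κ) ≥ (δW − U)/u_κ + log₂(1+b_κ). -/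
open Finset

/-- Lower-bound tightening rule of the reduction procedure: every dual-feasible
`γ` in the box `[0,b] × [0,b_s]` satisfies
`γ_κ ≥ 2^((δW − U)/u_κ) (1 + b_κ) − 1`, i.e.
`log₂(1+γ_κ) ≥ (δW − U)/u_κ + log₂(1+b_κ)`. -/
theorem stmt_11 {K : ℕ} (u : Fin K → ℝ) (hu : ∀ k, 0 ≤ u k) (κ : Fin K)
    (huκ : 0 < u κ) (δ W : ℝ) (hδ : 0 < δ) (hW : 0 < W)
    (γ C b : Fin K → ℝ) (s bs : ℝ)
    (hγ : ∀ k, 0 ≤ γ k) (hγb : ∀ k, γ k ≤ b k) (hs : 0 ≤ s) (hsb : s ≤ bs)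
    (hobj : ∑ k, u k * (C k + Real.logb 2 (1 + γ k)) ≥ δ * W)
    (hsum : ∑ k, C k ≤ Real.logb 2 (1 + s)) (hCpos : ∀ k, 0 ≤ C k)
    (U : ℝ)
    (hU : U = (⨆ k, u k) * Real.logb 2 (1 + bs) + ∑ k, u k * Real.logb 2 (1 + b k)) :
    γ κ ≥ 2 ^ ((δ * W - U) / u κ) * (1 + b κ) - 1 ∧
    Real.logb 2 (1 + γ κ) ≥ (δ * W - U) / u κ + Real.logb 2 (1 + b κ) := by
  set M := ⨆ k, u k with hM
  have hMk : ∀ k, u k ≤ M := fun k => le_ciSup (Set.Finite.bddAbove (Set.finite_range u)) k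
  have hM0 : 0 ≤ M := le_trans (hu κ) (hMk κ)
  have hbs0 : 0 ≤ bs := le_trans hs hsb
  have hlogbs : 0 ≤ Real.logb 2 (1 + bs) := Real.logb_nonneg one_lt_two (by linarith)
  -- Step 1: bound the C part
  have h1 : ∑ k, u k * C k ≤ M * Real.logb 2 (1 + bs) := by
    calc ∑ k, u k * C k ≤ ∑ k, M * C k :=
          Finset.sum_le_sum fun k _ => mul_le_mul_of_nonneg_right (hMk k) (hCpos k)
      _ = M * ∑ k, C k := by rw [Finset.mul_sum]
      _ ≤ M * Real.logb 2 (1 + bs) := by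
          apply mul_le_mul_of_nonneg_left _ hM0
          exact hsum.trans (Real.logb_le_logb_of_le one_lt_two (by linarith) (by linarith))
  -- Step 2: bound the γ part away from κ
  have hbk : ∀ k, 0 ≤ b k := fun k => le_trans (hγ k) (hγb k)
  have hlogγb : ∀ k, Real.logb 2 (1 + γ k) ≤ Real.logb 2 (1 + b k) := fun k =>
    Real.logb_le_logb_of_le one_lt_two (by linarith [hγ k]) (by linarith [hγb k])
  have h2 : ∑ k, u k * Real.logb 2 (1 + γ k) ≤
      (∑ k, u k * Real.logb 2 (1 + b k)) - u κ * Real.logb 2 (1 + b κ)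
      + u κ * Real.logb 2 (1 + γ κ) := by
    rw [← Finset.sum_erase_add Finset.univ _ (Finset.mem_univ κ),
        ← Finset.sum_erase_add Finset.univ (fun k => u k * Real.logb 2 (1 + b k))
          (Finset.mem_univ κ)]
    have : ∑ k ∈ Finset.univ.erase κ, u k * Real.logb 2 (1 + γ k) ≤
        ∑ k ∈ Finset.univ.erase κ, u k * Real.logb 2 (1 + b k) :=
      Finset.sum_le_sum fun k _ => mul_le_mul_of_nonneg_left (hlogγb k) (hu k)
    linarith
  -- Combine
  have hsplit : ∑ k, u k * (C k + Real.logb 2 (1 + γ k)) =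
      (∑ k, u k * C k) + ∑ k, u k * Real.logb 2 (1 + γ k) := by
    rw [← Finset.sum_add_distrib]; exact Finset.sum_congr rfl fun k _ => by ring
  have hkey : δ * W - U + u κ * Real.logb 2 (1 + b κ) ≤ u κ * Real.logb 2 (1 + γ κ) := by
    rw [hU]; rw [hsplit] at hobj; linarith
  have hlog : (δ * W - U) / u κ + Real.logb 2 (1 + b κ) ≤ Real.logb 2 (1 + γ κ) := by
    rw [div_add' _ _ _ (ne_of_gt huκ), div_le_iff₀ huκ]
    nlinarith
  refine ⟨?_, hlog⟩
  have hpow : (2:ℝ) ^ ((δ * W - U) / u κ + Real.logb 2 (1 + b κ)) ≤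
      (2:ℝ) ^ Real.logb 2 (1 + γ κ) :=
    Real.rpow_le_rpow_of_exponent_le one_le_two hlog
  rw [Real.rpow_add two_pos, Real.rpow_logb two_pos (by norm_num) (by linarith [hbk κ]),
      Real.rpow_logb two_pos (by norm_num) (by linarith [hγ κ])] at hpow
  linarith
end
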